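/- Let M' be a nonnegative matrix of the block form (M 0; w α) with α > 0, where M has psd rank k. In any psd factorization of M' of size k+1, the psd factor B associated to the last column of M' has rank exactly one. -/

import Mathlib

/-!
The psd factors `A i` of the first `p` rows satisfy `Tr (A i * B₀) = 0` against the last factor
`B₀`, and for psd matrices this forces `A i * B₀ = 0`. So every `A i` lives on `ker B₀`, and
compressing the first `p` row factors and first `q` column factors to `ker B₀` yields a psd
factorization of `M` of size `k + 1 - rank B₀`. Minimality of `k` gives `rank B₀ ≤ 1`, while
`Tr (A_last * B₀) = α > 0` gives `B₀ ≠ 0`.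
-/

/-- `M` admits a psd factorization of size `k`. -/
def HasPsdFact {p q : ℕ} (M : Matrix (Fin p) (Fin q) ℝ) (k : ℕ) : Prop :=
  ∃ (A : Fin p → Matrix (Fin k) (Fin k) ℝ) (B : Fin q → Matrix (Fin k) (Fin k) ℝ),
    (∀ i, (A i).PosSemidef) ∧ (∀ j, (B j).PosSemidef) ∧
    ∀ i j, (A i * B j).trace = M i j

open Matrix
open scoped ComplexOrder

namespace Matrix

theorem rank_eq_zero_iff {K m n : Type*} [Field K] [Fintype n] {A : Matrix m n K} :
    A.rank = 0 ↔ A = 0 := by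
  classical
  rw [rank, Submodule.finrank_eq_zero, LinearMap.range_eq_bot, ← toLin'_apply',
    map_eq_zero_iff _ toLin'.injective]

variable {𝕜 : Type*} [RCLike 𝕜] {m n : Type*} [Fintype n]

theorem PosSemidef.mul_eq_zero_of_trace_mul_eq_zero {X Y : Matrix n n 𝕜}
    (hX : X.PosSemidef) (hY : Y.PosSemidef) (h : (X * Y).trace = 0) : X * Y = 0 := by
  classical
  open scoped MatrixOrder in
  obtain ⟨S, rfl⟩ := CStarAlgebra.nonneg_iff_eq_star_mul_self.mp hX.nonneg
  open scoped MatrixOrder in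
  obtain ⟨T, rfl⟩ := CStarAlgebra.nonneg_iff_eq_star_mul_self.mp hY.nonneg
  -- `Tr (Sᴴ S Tᴴ T)` is the squared Frobenius norm of `S Tᴴ`.
  have hST : S * Tᴴ = 0 := by
    rw [← trace_mul_conjTranspose_self_eq_zero_iff, conjTranspose_mul,
      conjTranspose_conjTranspose, ← h, star_eq_conjTranspose, star_eq_conjTranspose,
      ← trace_mul_cycle]
    simpa only [Matrix.mul_assoc] using trace_mul_comm (Tᴴ * T) (Sᴴ * S)
  simp only [star_eq_conjTranspose]
  calc Sᴴ * S * (Tᴴ * T) = Sᴴ * (S * Tᴴ) * T := by simp only [Matrix.mul_assoc]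
    _ = 0 := by rw [hST, Matrix.mul_zero, Matrix.zero_mul]

section IsHermitian

variable [DecidableEq n] {B : Matrix n n 𝕜} (hB : B.IsHermitian)
include hB

theorem IsHermitian.mulVec_eigenvectorBasis_eq_zero_of_mul_eq_zero {X : Matrix m n 𝕜}
    (hXB : X * B = 0) {j : n} (hj : hB.eigenvalues j ≠ 0) :
    X *ᵥ ⇑(hB.eigenvectorBasis j) = 0 := by
  have h := congrArg (X *ᵥ ·) (hB.mulVec_eigenvectorBasis j)
  simp only [mulVec_mulVec, hXB, zero_mulVec, mulVec_smul] at h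
  exact (smul_eq_zero.mp h.symm).resolve_left (by exact_mod_cast hj)

theorem IsHermitian.exists_mul_conjTranspose_mul_eq_self_of_mul_eq_zero :
    ∃ C : Matrix (Fin (Fintype.card n - B.rank)) n 𝕜,
      ∀ X : Matrix m n 𝕜, X * B = 0 → X * (Cᴴ * C) = X := by
  classical
  set U : Matrix n n 𝕜 := (hB.eigenvectorUnitary : Matrix n n 𝕜)
  -- The rows of `C` are the eigenvectors for the eigenvalue `0`, an orthonormal basis of
  -- `ker B`; so `Cᴴ * C` is the orthogonal projection onto `ker B`.
  let C : Matrix {j // hB.eigenvalues j = 0} n 𝕜 := (star U).submatrix Subtype.val id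
  have hcard : Fintype.card {j // hB.eigenvalues j = 0} = Fintype.card n - B.rank := by
    rw [hB.rank_eq_card_non_zero_eigs, Fintype.card_subtype_compl]
    have := Fintype.card_subtype_le (fun j => hB.eigenvalues j = 0)
    omega
  let e := Fintype.equivFinOfCardEq hcard
  refine ⟨C.submatrix e.symm id, fun X hXB => ?_⟩
  have hXU (a : m) (j : {j // ¬hB.eigenvalues j = 0}) : (X * U) a j = 0 :=
    congrFun (hB.mulVec_eigenvectorBasis_eq_zero_of_mul_eq_zero hXB j.2) a
  calc X * ((C.submatrix e.symm id)ᴴ * C.submatrix e.symm id)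
      = (X * U).submatrix id (Subtype.val : {j // hB.eigenvalues j = 0} → n) * C := by
        rw [conjTranspose_submatrix, submatrix_mul_equiv, submatrix_id_id, ← Matrix.mul_assoc,
          submatrix_mul _ _ _ _ _ Function.bijective_id, submatrix_id_id, conjTranspose_submatrix,
          star_eq_conjTranspose, conjTranspose_conjTranspose]
    _ = X * U * star U := by
        ext a y
        rw [Matrix.mul_apply, Matrix.mul_apply, ← Fintype.sum_subtype_add_sum_subtype
          (fun j => hB.eigenvalues j = 0) (fun j => (X * U) a j * star U j y)]
        simp [C, hXU]
    _ = X := by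
        rw [Matrix.mul_assoc, mem_unitaryGroup_iff.mp hB.eigenvectorUnitary.2, Matrix.mul_one]

end IsHermitian

end Matrix

theorem hasPsdFact_of_mul_conjTranspose_mul_eq_self {p q n m : ℕ}
    {N : Matrix (Fin p) (Fin q) ℝ} {A : Fin p → Matrix (Fin n) (Fin n) ℝ}
    {B : Fin q → Matrix (Fin n) (Fin n) ℝ} (hA : ∀ i, (A i).PosSemidef)
    (hB : ∀ j, (B j).PosSemidef) (hAB : ∀ i j, (A i * B j).trace = N i j)
    (C : Matrix (Fin m) (Fin n) ℝ) (hC : ∀ i, A i * (Cᴴ * C) = A i) : HasPsdFact N m := by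
  have hC' (i : Fin p) : Cᴴ * C * A i = A i := by
    simpa only [conjTranspose_mul, conjTranspose_conjTranspose, (hA i).isHermitian.eq]
      using congrArg conjTranspose (hC i)
  refine ⟨fun i => C * A i * Cᴴ, fun j => C * B j * Cᴴ,
    fun i => (hA i).mul_mul_conjTranspose_same C, fun j => (hB j).mul_mul_conjTranspose_same C,
    fun i j => ?_⟩
  calc (C * A i * Cᴴ * (C * B j * Cᴴ)).trace = (Cᴴ * C * A i * (Cᴴ * C) * B j).trace := by
        rw [← Matrix.mul_assoc (C * A i * Cᴴ), trace_mul_comm]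
        simp only [Matrix.mul_assoc]
    _ = N i j := by rw [hC', hC, hAB]

theorem stmt5_general (p q k : ℕ) (M : Matrix (Fin p) (Fin q) ℝ)
    (hk : IsLeast {k' | HasPsdFact M k'} k)
    (α : ℝ) (hα : 0 < α)
    (M' : Matrix (Fin (p+1)) (Fin (q+1)) ℝ)
    (hM'₁ : ∀ (i : Fin p) (j : Fin q), M' i.castSucc j.castSucc = M i j)
    (hM'₂ : ∀ i : Fin p, M' i.castSucc (Fin.last q) = 0)
    (hM'₄ : M' (Fin.last p) (Fin.last q) = α)
    (A : Fin (p+1) → Matrix (Fin (k+1)) (Fin (k+1)) ℝ)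
    (B : Fin (q+1) → Matrix (Fin (k+1)) (Fin (k+1)) ℝ)
    (hA : ∀ i, (A i).PosSemidef) (hB : ∀ j, (B j).PosSemidef)
    (hfact : ∀ i j, (A i * B j).trace = M' i j) :
    (B (Fin.last q)).rank = 1 := by
  set B₀ := B (Fin.last q)
  have hker (i : Fin p) : A i.castSucc * B₀ = 0 :=
    (hA _).mul_eq_zero_of_trace_mul_eq_zero (hB _) ((hfact _ _).trans (hM'₂ i))
  obtain ⟨C, hC⟩ :=
    (hB _).isHermitian.exists_mul_conjTranspose_mul_eq_self_of_mul_eq_zero (m := Fin (k + 1))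
  have hsmaller : HasPsdFact M (Fintype.card (Fin (k + 1)) - B₀.rank) :=
    hasPsdFact_of_mul_conjTranspose_mul_eq_self (fun i => hA _) (fun j => hB _)
      (fun i j => (hfact _ _).trans (hM'₁ i j)) C fun i => hC _ (hker i)
  have hB₀ : B₀ ≠ 0 := by
    intro h
    have hα' : (A (Fin.last p) * B₀).trace = α := (hfact _ _).trans hM'₄
    rw [h, Matrix.mul_zero, trace_zero] at hα'
    exact hα.ne hα'
  have hle := hk.2 hsmaller
  rw [Fintype.card_fin] at hle
  have hpos : B₀.rank ≠ 0 := rank_eq_zero_iff.not.mpr hB₀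
  have hwidth := B₀.rank_le_width
  omega

/-- if `M'` is the block matrix `(M 0; w α)` with `α > 0` and `M` has psd
rank `k`, then in any psd factorization of `M'` of size `k+1` the factor associated to
the last column has rank exactly one. -/
theorem stmt5 (p q k : ℕ) (M : Matrix (Fin p) (Fin q) ℝ)
    (hM : ∀ i j, 0 ≤ M i j)
    (hk : IsLeast {k' | HasPsdFact M k'} k)
    (w : Fin q → ℝ) (hw : ∀ j, 0 ≤ w j) (α : ℝ) (hα : 0 < α)
    (M' : Matrix (Fin (p+1)) (Fin (q+1)) ℝ)
    (hM'₁ : ∀ (i : Fin p) (j : Fin q), M' i.castSucc j.castSucc = M i j)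
    (hM'₂ : ∀ i : Fin p, M' i.castSucc (Fin.last q) = 0)
    (hM'₃ : ∀ j : Fin q, M' (Fin.last p) j.castSucc = w j)
    (hM'₄ : M' (Fin.last p) (Fin.last q) = α)
    (A : Fin (p+1) → Matrix (Fin (k+1)) (Fin (k+1)) ℝ)
    (B : Fin (q+1) → Matrix (Fin (k+1)) (Fin (k+1)) ℝ)
    (hA : ∀ i, (A i).PosSemidef) (hB : ∀ j, (B j).PosSemidef)
    (hfact : ∀ i j, (A i * B j).trace = M' i j) :
    (B (Fin.last q)).rank = 1 :=
  stmt5_general p q k M hk α hα M' hM'₁ hM'₂ hM'₄ A B hA hB hfact
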